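/- There exist constants c₁, c₂, C, c > 0 and a family of trees (t_n) over the ranked alphabet {a, b, c} with rank(a) = 0, rank(b) = 1, rank(c) = 2, such that for all sufficiently large n: (i) c₁·n ≤ |t_n| ≤ c₂·n; (ii) every subtree s of t_n has depth at most C·log₂(|s|) + C; and (iii) the minimal dag of t_n has size at least c·n·log₂log₂(n)/log₂(n). -/

import Mathlib

universe u v

/-- Finite rooted ordered labelled trees. -/
inductive RTree (L : Type u) : Type u
  | node : L → List (RTree L) → RTree L

namespace RTree

/-- The number of nodes of a tree. -/
def size {L : Type u} : RTree L → ℕ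
  | .node _ ts => 1 + (ts.attach.map (fun x => x.1.size)).sum
termination_by t => sizeOf t
decreasing_by simp_wf; have := List.sizeOf_lt_of_mem x.2; omega

/-- The list of labels of the nodes of a tree. -/
def labelsList {L : Type u} : RTree L → List L
  | .node f ts => f :: (ts.attach.map (fun x => x.1.labelsList)).flatten
termination_by t => sizeOf t
decreasing_by simp_wf; have := List.sizeOf_lt_of_mem x.2; omega

/-- The depth of a tree: the maximal number of edges on a path from the root
to a leaf. -/
def depth {L : Type u} : RTree L → ℕ
  | .node _ ts => (ts.attach.map (fun x => x.1.depth + 1)).foldr max 0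
termination_by t => sizeOf t
decreasing_by simp_wf; have := List.sizeOf_lt_of_mem x.2; omega

/-- `Subtree s t` holds iff `s` is the subtree of `t` rooted at some node
of `t`. -/
inductive Subtree {L : Type u} : RTree L → RTree L → Prop
  | refl (t : RTree L) : Subtree t t
  | child {s t : RTree L} {f : L} {ts : List (RTree L)} :
      t ∈ ts → Subtree s t → Subtree s (.node f ts)

/-- A tree is well-formed over a ranked alphabet if every node labelled by a
symbol of rank `k` has exactly `k` children. -/
inductive WF {L : Type u} (rk : L → ℕ) : RTree L → Prop
  | node {f : L} {ts : List (RTree L)} :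
      ts.length = rk f → (∀ t ∈ ts, WF rk t) → WF rk (.node f ts)

end RTree

/-- The ranked alphabet `{a, b, c}` with `rank(a) = 0`, `rank(b) = 1`,
`rank(c) = 2`. -/
inductive ABC : Type
  | a | b | c

/-- The rank function of the alphabet `{a, b, c}`. -/
def ABC.rk : ABC → ℕ
  | .a => 0
  | .b => 1
  | .c => 2

/-!
Take a perfect binary tree of height `h` and hang below its `i`-th leaf a chain of
`k = ⌊log₂ h⌋ + 1` unary nodes above a perfect tree of height `k` whose `2 ^ k > h` leaves spell
out the binary digits of `i`. The `2 ^ h (k + 1)` chain suffixes are pairwise distinct subtrees,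
while the size is `Θ(h 2 ^ h)`. Every subtree `s` satisfies `2 ^ depth s ≤ (|s| + 1) ^ 2`: a chain
is not longer than the height of the code below it, and a perfect tree over leaves of equal size
multiplies both sides of the inequality by at least `2 ^ height`. Choosing `h` maximal with
`h 2 ^ h ≤ n` gives `|t| ≍ n`, `log n ≍ h` and `log log n ≤ k + 2`.
-/

namespace RTree

variable {L : Type*}

theorem size_node (f : L) (ts : List (RTree L)) :
    (node f ts).size = 1 + (ts.map size).sum := by
  rw [size, List.attach_map_val (f := size)]

theorem depth_node (f : L) (ts : List (RTree L)) :
    (node f ts).depth = (ts.map (fun t => t.depth + 1)).foldr max 0 := by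
  rw [depth]
  exact congrArg _ (List.attach_map_val (f := fun t : RTree L => t.depth + 1))

@[simp] theorem size_node_nil (f : L) : (node f []).size = 1 := by
  simp [size_node]

@[simp] theorem size_node_singleton (f : L) (x : RTree L) :
    (node f [x]).size = 1 + x.size := by
  simp [size_node]

@[simp] theorem size_node_pair (f : L) (x y : RTree L) :
    (node f [x, y]).size = 1 + x.size + y.size := by
  simp [size_node, Nat.add_assoc]

@[simp] theorem depth_node_nil (f : L) : (node f []).depth = 0 := by
  simp [depth_node]

@[simp] theorem depth_node_singleton (f : L) (x : RTree L) :
    (node f [x]).depth = x.depth + 1 := by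
  simp [depth_node]

@[simp] theorem depth_node_pair (f : L) (x y : RTree L) :
    (node f [x, y]).depth = max (x.depth + 1) (y.depth + 1) := by
  simp [depth_node]

theorem one_le_size (t : RTree L) : 1 ≤ t.size := by
  obtain ⟨f, ts⟩ := t
  rw [size_node]
  omega

theorem Subtree.trans {r s t : RTree L} (hrs : r.Subtree s) (hst : s.Subtree t) :
    r.Subtree t := by
  induction hst with
  | refl => exact hrs
  | child mem _ ih => exact .child mem ih

theorem finite_setOf_subtree (t : RTree L) : {s : RTree L | s.Subtree t}.Finite := by
  obtain ⟨f, ts⟩ := t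
  have hchildren : ∀ x ∈ ts, {s : RTree L | s.Subtree x}.Finite := fun x hx =>
    have := List.sizeOf_lt_of_mem hx
    finite_setOf_subtree x
  refine ((ts.finite_toSet.biUnion hchildren).insert (node f ts)).subset ?_
  rintro s (_ | ⟨mem, hsub⟩)
  · exact Set.mem_insert _ _
  · exact Set.mem_insert_of_mem _ (Set.mem_biUnion mem hsub)
termination_by sizeOf t
decreasing_by simp_wf; omega

def chain (f : L) : ℕ → RTree L → RTree L
  | 0, t => t
  | j + 1, t => node f [chain f j t]

/-- The perfect binary tree of height `d` with inner nodes labelled `f` whose leaves, from left to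
right, are `g 0, …, g (2 ^ d - 1)`. -/
def perfect (f : L) : ℕ → (ℕ → RTree L) → RTree L
  | 0, g => g 0
  | d + 1, g => node f [perfect f d g, perfect f d (fun i => g (i + 2 ^ d))]

section chain

variable (f : L) (t : RTree L)

@[simp] theorem size_chain (j : ℕ) : (chain f j t).size = j + t.size := by
  induction j with
  | zero => simp [chain]
  | succ j ih => simp [chain, ih]; omega

@[simp] theorem depth_chain (j : ℕ) : (chain f j t).depth = j + t.depth := by
  induction j with
  | zero => simp [chain]
  | succ j ih => simp [chain, ih]; omega

theorem chain_injective (j : ℕ) : Function.Injective (chain f j) := by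
  induction j with
  | zero => exact fun _ _ h => h
  | succ j ih => exact fun _ _ h => ih (by simpa [chain] using h)

theorem subtree_chain_of_le {j m : ℕ} (h : j ≤ m) : (chain f j t).Subtree (chain f m t) := by
  induction m, h using Nat.le_induction with
  | base => exact .refl _
  | succ m _ ih => exact .child (List.mem_singleton_self _) ih

theorem wf_chain {rk : L → ℕ} (hf : rk f = 1) (ht : t.WF rk) (j : ℕ) : (chain f j t).WF rk := by
  induction j with
  | zero => exact ht
  | succ j ih => exact .node hf.symm (by simpa using ih)

end chain

section perfect

variable (f : L)

theorem size_perfect {S : ℕ} (d : ℕ) {g : ℕ → RTree L} (hS : ∀ i, (g i).size = S) :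
    (perfect f d g).size + 1 = 2 ^ d * (S + 1) := by
  induction d generalizing g with
  | zero => simp [perfect, hS]
  | succ d ih =>
    have hleft := ih hS
    have hright := ih (g := fun i => g (i + 2 ^ d)) (fun i => hS _)
    simp only [perfect, size_node_pair]
    rw [pow_succ]
    linarith

theorem depth_perfect {D : ℕ} (d : ℕ) {g : ℕ → RTree L} (hD : ∀ i, (g i).depth = D) :
    (perfect f d g).depth = d + D := by
  induction d generalizing g with
  | zero => simp [perfect, hD]
  | succ d ih =>
    simp only [perfect, depth_node_pair, ih hD, ih (g := fun i => g (i + 2 ^ d)) (fun i => hD _)]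
    omega

theorem apply_eq_of_perfect_eq {d : ℕ} {g g' : ℕ → RTree L} (h : perfect f d g = perfect f d g')
    {i : ℕ} (hi : i < 2 ^ d) : g i = g' i := by
  induction d generalizing g g' i with
  | zero => simp_all [perfect]
  | succ d ih =>
    simp only [perfect, node.injEq, List.cons.injEq, and_true, true_and] at h
    by_cases hlt : i < 2 ^ d
    · exact ih h.1 hlt
    · have := ih h.2 (i := i - 2 ^ d) (by rw [pow_succ] at hi; omega)
      simpa [Nat.sub_add_cancel (not_lt.mp hlt)] using this

theorem subtree_perfect {d : ℕ} (g : ℕ → RTree L) {i : ℕ} (hi : i < 2 ^ d) :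
    (g i).Subtree (perfect f d g) := by
  induction d generalizing g i with
  | zero => rw [Nat.lt_one_iff.mp hi]; exact .refl _
  | succ d ih =>
    by_cases hlt : i < 2 ^ d
    · exact .child (by simp) (ih g hlt)
    · have := ih (fun p => g (p + 2 ^ d)) (i := i - 2 ^ d) (by rw [pow_succ] at hi; omega)
      rw [Nat.sub_add_cancel (not_lt.mp hlt)] at this
      exact .child (by simp) this

theorem wf_perfect {rk : L → ℕ} (hf : rk f = 2) (d : ℕ) {g : ℕ → RTree L}
    (hg : ∀ i, (g i).WF rk) : (perfect f d g).WF rk := by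
  induction d generalizing g with
  | zero => exact hg 0
  | succ d ih =>
    refine .node hf.symm ?_
    simpa using ⟨ih hg, ih (fun i => hg _)⟩

end perfect

def LocallyShallow (t : RTree L) : Prop :=
  ∀ s : RTree L, s.Subtree t → 2 ^ s.depth ≤ (s.size + 1) ^ 2

theorem LocallyShallow.two_pow_depth_le {t : RTree L} (ht : t.LocallyShallow) :
    2 ^ t.depth ≤ (t.size + 1) ^ 2 :=
  ht t (.refl t)

theorem LocallyShallow.node {f : L} {ts : List (RTree L)} (hts : ∀ x ∈ ts, x.LocallyShallow)
    (h : 2 ^ (node f ts).depth ≤ ((node f ts).size + 1) ^ 2) : (node f ts).LocallyShallow := by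
  rintro s (_ | ⟨mem, hsub⟩)
  · exact h
  · exact hts _ mem _ hsub

theorem LocallyShallow.chain (f : L) {t : RTree L} (ht : t.LocallyShallow) {m : ℕ}
    (h : ∀ j ≤ m, 2 ^ (j + t.depth) ≤ (j + t.size + 1) ^ 2) : (chain f m t).LocallyShallow := by
  induction m with
  | zero => exact ht
  | succ m ih =>
    refine .node (by simpa using ih fun j hj => h j (by omega)) ?_
    have := h (m + 1) le_rfl
    simp only [depth_node_singleton, size_node_singleton, depth_chain, size_chain]
    convert this using 2 <;> ring

/-- The leaves being alike, the perfect tree has `|t| + 1 = 2 ^ d (S + 1)` and `depth t = d + D`,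
so `2 ^ D ≤ (S + 1) ^ 2` is multiplied by `2 ^ d ≤ (2 ^ d) ^ 2`. -/
theorem LocallyShallow.perfect (f : L) (d : ℕ) {g : ℕ → RTree L} {S D : ℕ}
    (hg : ∀ i, (g i).LocallyShallow) (hS : ∀ i, (g i).size = S) (hD : ∀ i, (g i).depth = D) :
    (perfect f d g).LocallyShallow := by
  induction d generalizing g with
  | zero => exact hg 0
  | succ d ih =>
    have hright := ih (g := fun i => g (i + 2 ^ d)) (fun _ => hg _) (fun _ => hS _) (fun _ => hD _)
    refine .node (by simpa using ⟨ih hg hS hD, hright⟩) ?_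
    rw [← RTree.perfect, size_perfect f _ hS, depth_perfect f _ hD, pow_add, mul_pow]
    have hleaf : 2 ^ D ≤ (S + 1) ^ 2 := by simpa [hS, hD] using (hg 0).two_pow_depth_le
    exact Nat.mul_le_mul (Nat.le_self_pow two_ne_zero _) hleaf

end RTree

namespace ABC

open RTree

/-- The two bits are mirror images, so that all codes of a given height have the same size and
depth. -/
def bit : Bool → RTree ABC
  | false => .node c [.node a [], .node b [.node a []]]
  | true => .node c [.node b [.node a []], .node a []]

@[simp] theorem size_bit (v : Bool) : (bit v).size = 4 := by
  cases v <;> simp [bit]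

@[simp] theorem depth_bit (v : Bool) : (bit v).depth = 2 := by
  cases v <;> simp [bit]

theorem bit_injective : Function.Injective bit := by
  intro v w h
  cases v <;> cases w <;> simp_all [bit]

theorem wf_bit (v : Bool) : (bit v).WF rk := by
  have leaf : (node a []).WF rk := .node rfl (by simp)
  have unary : (node b [node a []]).WF rk := .node rfl (by simpa using leaf)
  cases v <;> exact .node rfl (by simp [leaf, unary])

theorem locallyShallow_bit (v : Bool) : (bit v).LocallyShallow := by
  have leaf : (node a []).LocallyShallow := .node (by simp) (by simp)
  have unary : (node b [node a []]).LocallyShallow := .node (by simpa using leaf) (by simp)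
  cases v <;> exact .node (by simp [leaf, unary]) (by simp)

def code (k i : ℕ) : RTree ABC :=
  perfect c k fun p => bit (i.testBit p)

theorem size_code (k i : ℕ) : (code k i).size = 5 * 2 ^ k - 1 := by
  have := size_perfect c k (S := 4) (g := fun p => bit (i.testBit p)) fun _ => size_bit _
  rw [code]
  omega

theorem depth_code (k i : ℕ) : (code k i).depth = k + 2 :=
  depth_perfect c k fun _ => depth_bit _

theorem code_injOn (k : ℕ) : Set.InjOn (code k) (Set.Iio (2 ^ 2 ^ k)) := by
  intro i hi i' hi' h
  apply Nat.eq_of_testBit_eq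
  intro p
  by_cases hp : p < 2 ^ k
  · exact bit_injective (apply_eq_of_perfect_eq c h hp)
  · have hpow : 2 ^ 2 ^ k ≤ 2 ^ p := Nat.pow_le_pow_right two_pos (not_lt.mp hp)
    rw [Nat.testBit_lt_two_pow (lt_of_lt_of_le hi hpow),
      Nat.testBit_lt_two_pow (lt_of_lt_of_le hi' hpow)]

theorem wf_code (k i : ℕ) : (code k i).WF rk :=
  wf_perfect c rfl k fun _ => wf_bit _

theorem locallyShallow_chain_code (k i : ℕ) : (chain b k (code k i)).LocallyShallow := by
  refine (LocallyShallow.perfect c k (fun _ => locallyShallow_bit _) (fun _ => size_bit _)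
    (fun _ => depth_bit _)).chain b fun j hj => ?_
  rw [← code, depth_code]
  calc 2 ^ (j + (k + 2)) ≤ 2 ^ (k + k + 2) := Nat.pow_le_pow_right two_pos (by omega)
    _ = (2 * 2 ^ k) ^ 2 := by ring
    _ ≤ (j + (code k i).size + 1) ^ 2 := by
      have := Nat.one_le_two_pow (n := k)
      rw [size_code]
      gcongr
      omega

def codeHeight (h : ℕ) : ℕ := Nat.log 2 h + 1

theorem lt_two_pow_codeHeight (h : ℕ) : h < 2 ^ codeHeight h :=
  Nat.lt_pow_succ_log_self one_lt_two h

theorem two_pow_codeHeight_le {h : ℕ} (hh : h ≠ 0) : 2 ^ codeHeight h ≤ 2 * h := by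
  rw [codeHeight, pow_succ, mul_comm]
  exact Nat.mul_le_mul_left 2 (Nat.pow_log_le_self 2 hh)

theorem codeHeight_le {h : ℕ} (hh : h ≠ 0) : codeHeight h ≤ h :=
  Nat.log_lt_self 2 hh

def hardTree (h : ℕ) : RTree ABC :=
  perfect c h fun i => chain b (codeHeight h) (code (codeHeight h) i)

theorem wf_hardTree (h : ℕ) : (hardTree h).WF rk :=
  wf_perfect c rfl h fun _ => wf_chain b _ rfl (wf_code _ _) _

theorem locallyShallow_hardTree (h : ℕ) : (hardTree h).LocallyShallow :=
  LocallyShallow.perfect c h (fun _ => locallyShallow_chain_code _ _)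
    (fun _ => by rw [size_chain, size_code]) (fun _ => by rw [depth_chain, depth_code])

theorem size_hardTree (h : ℕ) :
    (hardTree h).size + 1 = 2 ^ h * (codeHeight h + 5 * 2 ^ codeHeight h) := by
  have := Nat.one_le_two_pow (n := codeHeight h)
  rw [hardTree, size_perfect c h fun _ => by rw [size_chain, size_code]]
  congr 1
  omega

theorem le_size_hardTree (h : ℕ) : h * 2 ^ h ≤ (hardTree h).size := by
  have hsize := size_hardTree h
  have hk := lt_two_pow_codeHeight h
  have : 2 ^ h * (h + 1) ≤ 2 ^ h * (codeHeight h + 5 * 2 ^ codeHeight h) :=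
    Nat.mul_le_mul_left _ (by omega)
  nlinarith [Nat.one_le_two_pow (n := h)]

theorem size_hardTree_le {h : ℕ} (hh : h ≠ 0) : (hardTree h).size ≤ 11 * (h * 2 ^ h) := by
  have hsize := size_hardTree h
  have := two_pow_codeHeight_le hh
  have := codeHeight_le hh
  have : 2 ^ h * (codeHeight h + 5 * 2 ^ codeHeight h) ≤ 2 ^ h * (11 * h) :=
    Nat.mul_le_mul_left _ (by omega)
  nlinarith

/-- The subtrees `chain b j (code k i)` with `i < 2 ^ h` and `j ≤ k` are pairwise distinct: their
size determines `j`, and `h < 2 ^ k` bits determine `i`. -/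
theorem le_ncard_subtree_hardTree (h : ℕ) :
    2 ^ h * (codeHeight h + 1) ≤ {s : RTree ABC | s.Subtree (hardTree h)}.ncard := by
  set k := codeHeight h
  have hcard : (↑(Finset.range (2 ^ h) ×ˢ Finset.range (k + 1)) : Set (ℕ × ℕ)).ncard =
      2 ^ h * (k + 1) := by
    rw [Set.ncard_coe_finset, Finset.card_product, Finset.card_range, Finset.card_range]
  rw [← hcard]
  have hcode : ∀ i < 2 ^ h, i ∈ Set.Iio (2 ^ 2 ^ k) := fun i hi =>
    hi.trans_le (Nat.pow_le_pow_right two_pos (lt_two_pow_codeHeight h).le)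
  refine Set.ncard_le_ncard_of_injOn (fun p => chain b p.2 (code k p.1)) ?_ ?_
    (finite_setOf_subtree _)
  · rintro ⟨i, j⟩ hij
    simp only [Finset.coe_product, Set.mem_prod, Finset.coe_range, Set.mem_Iio] at hij
    exact (subtree_chain_of_le b _ (Nat.lt_succ_iff.mp hij.2)).trans
      (subtree_perfect c (fun i => chain b k (code k i)) hij.1)
  · rintro ⟨i, j⟩ hij ⟨i', j'⟩ hij' heq
    simp only [Finset.coe_product, Set.mem_prod, Finset.coe_range, Set.mem_Iio] at hij hij'
    have hj : j = j' := by
      simpa [size_code] using congrArg size heq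
    subst hj
    rw [code_injOn k (hcode i hij.1) (hcode i' hij'.1) (chain_injective b j heq)]

def scale (n : ℕ) : ℕ := Nat.findGreatest (fun h => h * 2 ^ h ≤ n) n

theorem scale_mul_two_pow_le (n : ℕ) : scale n * 2 ^ scale n ≤ n :=
  Nat.findGreatest_spec (P := fun h => h * 2 ^ h ≤ n) (Nat.zero_le n) (by simp)

theorem one_le_scale {n : ℕ} (hn : 2 ≤ n) : 1 ≤ scale n :=
  Nat.le_findGreatest (P := fun h => h * 2 ^ h ≤ n) (by omega) (by simpa using hn)

theorem lt_four_mul_scale_mul_two_pow {n : ℕ} (hn : 2 ≤ n) :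
    n < 4 * (scale n * 2 ^ scale n) := by
  have hnext : n < (scale n + 1) * 2 ^ (scale n + 1) := by
    by_cases hle : scale n + 1 ≤ n
    · exact not_le.mp (Nat.findGreatest_is_greatest (P := fun h => h * 2 ^ h ≤ n) (n := n)
        (Nat.lt_succ_self _) hle)
    · exact (not_le.mp hle).trans_le (Nat.le_mul_of_pos_right _ (Nat.two_pow_pos _))
  have := one_le_scale hn
  rw [pow_succ] at hnext
  nlinarith [Nat.one_le_two_pow (n := scale n)]

end ABC

section

open Real

theorem natCast_le_two_mul_logb_add_two {d s : ℕ} (hs : 1 ≤ s) (h : 2 ^ d ≤ (s + 1) ^ 2) :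
    (d : ℝ) ≤ 2 * logb 2 s + 2 := by
  have hs' : (1 : ℝ) ≤ s := by exact_mod_cast hs
  have hpow : (2 : ℝ) ^ d ≤ 4 * (s : ℝ) ^ 2 := by
    have : (2 : ℝ) ^ d ≤ ((s : ℝ) + 1) ^ 2 := by exact_mod_cast h
    nlinarith
  have hlog : logb 2 (4 * (s : ℝ) ^ 2) = 2 * logb 2 s + 2 := by
    rw [logb_mul (by norm_num) (by positivity), logb_pow, show (4 : ℝ) = 2 ^ 2 by norm_num,
      logb_pow, logb_self_eq_one one_lt_two]
    ring
  rw [← hlog, le_logb_iff_rpow_le one_lt_two (by positivity), rpow_natCast]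
  exact hpow

theorem mul_logb_logb_div_logb_le {n h k : ℕ} (hh : 1 ≤ h) (hk : h < 2 ^ k)
    (hlow : h * 2 ^ h ≤ n) (hup : n ≤ 4 * (h * 2 ^ h)) :
    (n : ℝ) * logb 2 (logb 2 n) / logb 2 n ≤ 4 * 2 ^ h * (k + 2) := by
  have hh' : (1 : ℝ) ≤ h := by exact_mod_cast hh
  have hn : (0 : ℝ) < n := by exact_mod_cast (Nat.mul_pos hh (Nat.two_pow_pos h)).trans_le hlow
  have hlogn : (h : ℝ) ≤ logb 2 n := by
    rw [le_logb_iff_rpow_le one_lt_two hn, rpow_natCast]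
    exact_mod_cast (Nat.le_mul_of_pos_left _ hh).trans hlow
  have hloglogn : logb 2 (logb 2 n) ≤ (k + 2 : ℕ) := by
    have hn' : n ≤ 2 ^ (k + h + 2) := by
      rw [pow_add, pow_add]
      nlinarith [Nat.mul_le_mul_right (2 ^ h) hk.le]
    have hkh : k + h + 2 ≤ 2 ^ (k + 2) := by
      have := Nat.lt_two_pow_self (n := k)
      rw [pow_add]
      omega
    rw [logb_le_iff_le_rpow one_lt_two (by linarith), rpow_natCast]
    calc logb 2 n ≤ (k + h + 2 : ℕ) := by
          rw [logb_le_iff_le_rpow one_lt_two hn, rpow_natCast]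
          exact_mod_cast hn'
      _ ≤ (2 : ℝ) ^ (k + 2) := by exact_mod_cast hkh
  have hloglogn_nonneg : 0 ≤ logb 2 (logb 2 n) := logb_nonneg one_lt_two (by linarith)
  calc (n : ℝ) * logb 2 (logb 2 n) / logb 2 n
      ≤ (4 * (h * 2 ^ h)) * logb 2 (logb 2 n) / h := by
        gcongr
        exact_mod_cast hup
    _ = 4 * 2 ^ h * logb 2 (logb 2 n) := by field_simp
    _ ≤ 4 * 2 ^ h * (k + 2) := by gcongr; exact_mod_cast hloglogn

end

/-- A family of trees of linear size, all of whose subtrees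
`s` have depth `O(log |s|)`, whose minimal dags have size
`Ω(n·log log n / log n)` (i.e. with that many pairwise distinct subtrees). -/
theorem exists_locally_shallow_trees_with_large_dag :
    ∃ (c₁ c₂ C c : ℝ), 0 < c₁ ∧ 0 < c₂ ∧ 0 < C ∧ 0 < c ∧
      ∃ t : ℕ → RTree ABC, (∀ n, (t n).WF ABC.rk) ∧
        ∃ n₀ : ℕ, ∀ n : ℕ, n₀ ≤ n →
          (c₁ * (n : ℝ) ≤ ((t n).size : ℝ) ∧ ((t n).size : ℝ) ≤ c₂ * (n : ℝ)) ∧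
          (∀ s : RTree ABC, s.Subtree (t n) →
            (s.depth : ℝ) ≤ C * Real.logb 2 (s.size : ℝ) + C) ∧
          c * (n : ℝ) * Real.logb 2 (Real.logb 2 (n : ℝ)) / Real.logb 2 (n : ℝ) ≤
            ({s : RTree ABC | s.Subtree (t n)}.ncard : ℝ) := by
  refine ⟨1 / 4, 11, 2, 1 / 8, by norm_num, by norm_num, by norm_num, by norm_num,
    fun n => ABC.hardTree (ABC.scale n), fun n => ABC.wf_hardTree _, 2, fun n hn => ?_⟩
  set h := ABC.scale n
  have hh : 1 ≤ h := ABC.one_le_scale hn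
  have hlow : h * 2 ^ h ≤ n := ABC.scale_mul_two_pow_le n
  have hup : n < 4 * (h * 2 ^ h) := ABC.lt_four_mul_scale_mul_two_pow hn
  refine ⟨⟨?_, ?_⟩, fun s hs => ?_, ?_⟩
  · have : n ≤ 4 * (ABC.hardTree h).size := by linarith [ABC.le_size_hardTree h]
    have : (n : ℝ) ≤ 4 * (ABC.hardTree h).size := by exact_mod_cast this
    linarith
  · have : (ABC.hardTree h).size ≤ 11 * n := by
      linarith [ABC.size_hardTree_le (h := h) (by omega)]
    exact_mod_cast this
  · exact natCast_le_two_mul_logb_add_two s.one_le_size (ABC.locallyShallow_hardTree h s hs)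
  · have hdag : (2 : ℝ) ^ h * (ABC.codeHeight h + 1) ≤
        {s : RTree ABC | s.Subtree (ABC.hardTree h)}.ncard := by
      exact_mod_cast ABC.le_ncard_subtree_hardTree h
    have := mul_logb_logb_div_logb_le hh (ABC.lt_two_pow_codeHeight h) hlow hup.le
    calc 1 / 8 * (n : ℝ) * Real.logb 2 (Real.logb 2 n) / Real.logb 2 n
        = (n * Real.logb 2 (Real.logb 2 n) / Real.logb 2 n) / 8 := by ring
      _ ≤ 4 * 2 ^ h * (ABC.codeHeight h + 2) / 8 := by gcongr
      _ ≤ 2 ^ h * (ABC.codeHeight h + 1) := by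
        have : (0 : ℝ) ≤ 2 ^ h * ABC.codeHeight h := by positivity
        linarith
      _ ≤ _ := hdag
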